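/- arXiv:2005.02197 — 5 statements merged into one kernel-verified Lean document; each statement's English description precedes it below -/
import Mathlib

section
/- Let (a_i)_{i≥0} be a sequence of nonnegative reals and α > 0. If the sum S := ∑_{k=1}^∞ ∏_{i=0}^{k-1} a_i/(a_i+α) is finite, then ∑_{k=1}^∞ k · (α/(a_k+α)) · ∏_{i=0}^{k-1} a_i/(a_i+α) = S. -/
/-!
With `r i = a i / (a i + α) ∈ [0, 1]` and `P k = ∏_{i ≤ k} r i`, we have `α / (a (k+1) + α) = 1 - r (k+1)`,
so the `k`-th summand is `(k + 1) (P k - P (k+1))`. Summation by parts turns the partial sums into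
`∑_{k<n} P k - n P n`, and `n P n → 0` because `P` is antitone and summable.
-/

open Filter Finset

theorem Antitone.tendsto_natCast_mul_of_summable {f : ℕ → ℝ} (hf : Antitone f)
    (hs : Summable f) : Tendsto (fun n : ℕ => (n : ℝ) * f n) atTop (nhds 0) := by
  have hf0 : ∀ n, 0 ≤ f n := hf.le_of_tendsto hs.tendsto_atTop_zero
  have hhalf : Tendsto (fun n : ℕ => n / 2) atTop atTop :=
    tendsto_atTop_atTop.2 fun b => ⟨2 * b, fun n hn => by omega⟩
  have hblock : Tendsto (fun n : ℕ => 2 * ∑ k ∈ Ico (n / 2) n, f k) atTop (nhds 0) := by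
    have h := hs.hasSum.tendsto_sum_nat
    have := (h.sub (h.comp hhalf)).const_mul 2
    rw [sub_self, mul_zero] at this
    refine this.congr fun n => ?_
    rw [sum_Ico_eq_sub _ (Nat.div_le_self n 2)]
    rfl
  -- `n f n ≤ 2 (n - n/2) f n ≤ 2 ∑_{n/2 ≤ k < n} f k`, a difference of partial sums tending to `0`.
  refine tendsto_of_tendsto_of_tendsto_of_le_of_le tendsto_const_nhds hblock
    (fun n => mul_nonneg n.cast_nonneg (hf0 n)) fun n => ?_
  have hcard : (n : ℝ) ≤ 2 * ((n - n / 2 : ℕ) : ℝ) := by norm_cast; omega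
  calc (n : ℝ) * f n ≤ 2 * ((n - n / 2 : ℕ) * f n) := by nlinarith [hf0 n]
    _ = 2 * ∑ k ∈ Ico (n / 2) n, f n := by simp
    _ ≤ 2 * ∑ k ∈ Ico (n / 2) n, f k := by
      gcongr with k hk
      exact hf (mem_Ico.1 hk).2.le

theorem sum_range_natCast_succ_mul_sub (P : ℕ → ℝ) (n : ℕ) :
    ∑ k ∈ range n, ((k : ℝ) + 1) * (P k - P (k + 1)) = ∑ k ∈ range n, P k - n * P n := by
  induction n with
  | zero => simp
  | succ n ih =>
    rw [sum_range_succ, ih, sum_range_succ]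
    push_cast
    ring

theorem Antitone.hasSum_natCast_succ_mul_sub {P : ℕ → ℝ} (hP : Antitone P) (hs : Summable P) :
    HasSum (fun k : ℕ => ((k : ℝ) + 1) * (P k - P (k + 1))) (∑' k, P k) := by
  refine (hasSum_iff_tendsto_nat_of_nonneg
    (fun k => mul_nonneg k.cast_add_one_pos.le (sub_nonneg.2 (hP k.le_succ))) _).2 ?_
  simp_rw [sum_range_natCast_succ_mul_sub]
  simpa using hs.hasSum.tendsto_sum_nat.sub (hP.tendsto_natCast_mul_of_summable hs)

theorem antitone_prod_range_of_le_one {r : ℕ → ℝ} (hr0 : ∀ i, 0 ≤ r i) (hr1 : ∀ i, r i ≤ 1) :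
    Antitone fun k => ∏ i ∈ range k, r i :=
  antitone_nat_of_succ_le fun k => by
    rw [prod_range_succ]
    exact mul_le_of_le_one_right (prod_nonneg fun i _ => hr0 i) (hr1 k)

theorem stmt_1 (a : ℕ → ℝ) (α : ℝ) (ha : ∀ i, 0 ≤ a i) (hα : 0 < α)
    (hS : Summable (fun k : ℕ => ∏ i ∈ Finset.range (k + 1), a i / (a i + α))) :
    ∑' k : ℕ, ((k : ℝ) + 1) * (α / (a (k + 1) + α)) *
        ∏ i ∈ Finset.range (k + 1), a i / (a i + α) =
      ∑' k : ℕ, ∏ i ∈ Finset.range (k + 1), a i / (a i + α) := by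
  let P : ℕ → ℝ := fun k => ∏ i ∈ range (k + 1), a i / (a i + α)
  have hpos : ∀ i, 0 < a i + α := fun i => add_pos_of_nonneg_of_pos (ha i) hα
  have hP : Antitone P :=
    (antitone_prod_range_of_le_one (fun i => div_nonneg (ha i) (hpos i).le)
      fun i => div_le_one_of_le₀ (le_add_of_nonneg_right hα.le) (hpos i).le).comp_monotone
      fun _ _ h => Nat.succ_le_succ h
  have hterm : ∀ k : ℕ, ((k : ℝ) + 1) * (α / (a (k + 1) + α)) * P k
      = ((k : ℝ) + 1) * (P k - P (k + 1)) := by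
    intro k
    have hP_succ : P (k + 1) = P k * (a (k + 1) / (a (k + 1) + α)) := prod_range_succ _ _
    rw [hP_succ]
    field_simp [(hpos (k + 1)).ne']
    ring
  exact (tsum_congr hterm).trans (hP.hasSum_natCast_succ_mul_sub hS).tsum_eq
end

section
/- Let g > 0, h > 0 and λ > g. Then ∑_{n=1}^∞ ∏_{i=0}^{n-1} (g·i + h)/(g·i + h + λ) = h/(λ - g). Moreover, if 0 < λ ≤ g, the series diverges to ∞. -/
/-!
Write `p n = ∏_{i<n} (g i + h) / (g i + h + l)` and `q n = p n * (g n + h)`. Since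
`p (n + 1) = q n / (g n + h + l)`, one gets `(l - g) p (n + 1) = q n - q (n + 1)`, so the partial
sums telescope to `(h - q N) / (l - g)`. For `l > g` the sequence `q` decreases, and its limit
must be `0`, as otherwise the summable `p (n + 1)` would dominate a multiple of the harmonic series.
For `l ≤ g` the sequence `q` increases, so `p (n + 1) ≥ h / (g n + h + l)` and the series diverges.
-/

open Filter Finset Topology

lemma not_summable_div_nat_add {b c : ℝ} (hb : b ≠ 0) (hc : 0 < c) :
    ¬ Summable fun n : ℕ => b / (n + c) := by
  intro hs
  refine lt_irrefl 1 ((Real.summable_one_div_nat_add_rpow c 1).mp <|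
    (hs.mul_left b⁻¹).congr fun n => ?_)
  rw [Real.rpow_one, abs_of_pos (by positivity), inv_mul_eq_div, div_div_cancel_left' hb, one_div]

lemma Antitone.tendsto_zero_of_summable_div_nat_add {a : ℕ → ℝ} (ha : Antitone a)
    (ha₀ : ∀ n, 0 ≤ a n) {c : ℝ} (hc : 0 < c) (hs : Summable fun n => a n / (n + c)) :
    Tendsto a atTop (𝓝 0) := by
  have hbdd : BddBelow (Set.range a) := ⟨0, Set.forall_mem_range.mpr ha₀⟩
  have hlim := tendsto_atTop_ciInf ha hbdd
  suffices hL : ⨅ n, a n = 0 by rwa [hL] at hlim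
  by_contra hL
  have hL_pos : 0 < ⨅ n, a n := (le_ciInf ha₀).lt_of_ne' hL
  refine not_summable_div_nat_add hL_pos.ne' hc (hs.of_nonneg_of_le (fun n => ?_) fun n => ?_)
  · positivity
  · gcongr
    exact ciInf_le hbdd n

noncomputable def affineRatioProd (g h l : ℝ) (n : ℕ) : ℝ :=
  ∏ i ∈ range n, (g * i + h) / (g * i + h + l)

namespace affineRatioProd

variable {g h l : ℝ}

lemma pos (hg : 0 ≤ g) (hh : 0 < h) (hl : 0 ≤ l) (n : ℕ) : 0 < affineRatioProd g h l n :=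
  prod_pos fun i _ => by positivity

lemma succ (n : ℕ) :
    affineRatioProd g h l (n + 1) = affineRatioProd g h l n * (g * n + h) / (g * n + h + l) := by
  rw [affineRatioProd, prod_range_succ, mul_div_assoc]
  rfl

lemma sub_mul_succ {n : ℕ} (hn : g * n + h + l ≠ 0) :
    (l - g) * affineRatioProd g h l (n + 1) =
      affineRatioProd g h l n * (g * n + h) -
        affineRatioProd g h l (n + 1) * (g * (n + 1 : ℕ) + h) := by
  rw [succ]
  field_simp
  push_cast
  ring

lemma sub_mul_sum_range_succ (hg : 0 ≤ g) (hh : 0 < h) (hl : 0 ≤ l) (N : ℕ) :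
    (l - g) * ∑ n ∈ range N, affineRatioProd g h l (n + 1) =
      h - affineRatioProd g h l N * (g * N + h) := by
  rw [mul_sum, sum_congr rfl fun n _ => sub_mul_succ (by positivity)]
  rw [sum_range_sub' (fun n => affineRatioProd g h l n * (g * n + h))]
  simp [affineRatioProd]

lemma mul_succ_eq_div_nat_add (hg : 0 < g) (hh : 0 < h) (hl : 0 ≤ l) (n : ℕ) :
    g * affineRatioProd g h l (n + 1) =
      affineRatioProd g h l n * (g * n + h) / (n + (h + l) / g) := by
  have : g * n + h + l ≠ 0 := by positivity
  rw [succ]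
  field_simp
  ring

lemma hasSum_succ (hg : 0 < g) (hh : 0 < h) (hgl : g < l) :
    HasSum (fun n => affineRatioProd g h l (n + 1)) (h / (l - g)) := by
  have hl : 0 < l := hg.trans hgl
  have hlg : 0 < l - g := sub_pos.mpr hgl
  set q : ℕ → ℝ := fun n => affineRatioProd g h l n * (g * n + h)
  have hq₀ (n : ℕ) : 0 ≤ q n := (mul_pos (pos hg.le hh hl.le n) (by positivity)).le
  have hterm₀ (n : ℕ) : 0 ≤ affineRatioProd g h l (n + 1) := (pos hg.le hh hl.le _).le
  have hpartial (N : ℕ) :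
      ∑ n ∈ range N, affineRatioProd g h l (n + 1) = (h - q N) / (l - g) := by
    rw [eq_div_iff hlg.ne', mul_comm, sub_mul_sum_range_succ hg.le hh hl.le]
  have hq_anti : Antitone q := antitone_nat_of_succ_le fun n => by
    have hstep : (l - g) * affineRatioProd g h l (n + 1) = q n - q (n + 1) :=
      sub_mul_succ (by positivity)
    nlinarith [hterm₀ n]
  have hsummable : Summable fun n => affineRatioProd g h l (n + 1) :=
    summable_of_sum_range_le (c := h / (l - g)) hterm₀ fun N => by
      rw [hpartial]
      gcongr
      linarith [hq₀ N]
  have hq_lim : Tendsto q atTop (𝓝 0) :=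
    hq_anti.tendsto_zero_of_summable_div_nat_add hq₀ (by positivity) <|
      (hsummable.mul_left g).congr (mul_succ_eq_div_nat_add hg hh hl.le)
  rw [hasSum_iff_tendsto_nat_of_nonneg hterm₀, funext hpartial]
  simpa using (hq_lim.const_sub h).div_const (l - g)

lemma tendsto_sum_range_succ_atTop (hg : 0 < g) (hh : 0 < h) (hl : 0 ≤ l) (hlg : l ≤ g) :
    Tendsto (fun N => ∑ n ∈ range N, affineRatioProd g h l (n + 1)) atTop atTop := by
  set q : ℕ → ℝ := fun n => affineRatioProd g h l n * (g * n + h)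
  have hterm₀ (n : ℕ) : 0 ≤ affineRatioProd g h l (n + 1) := (pos hg.le hh hl _).le
  have hq_mono : Monotone q := monotone_nat_of_le_succ fun n => by
    have hstep : (l - g) * affineRatioProd g h l (n + 1) = q n - q (n + 1) :=
      sub_mul_succ (by positivity)
    nlinarith [hterm₀ n]
  rw [← not_summable_iff_tendsto_nat_atTop_of_nonneg hterm₀, ← summable_mul_left_iff hg.ne']
  refine fun hs => not_summable_div_nat_add hh.ne' (c := (h + l) / g) (by positivity)
    (hs.of_nonneg_of_le (fun n => by positivity) fun n => ?_)
  rw [mul_succ_eq_div_nat_add hg hh hl]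
  gcongr
  simpa [q, affineRatioProd] using hq_mono (Nat.zero_le n)

end affineRatioProd

theorem stmt_4 (g h l : ℝ) (hg : 0 < g) (hh : 0 < h) (hl : 0 < l) :
    (g < l →
      ∑' n : ℕ, ∏ i ∈ Finset.range (n + 1),
          (g * i + h) / (g * i + h + l) = h / (l - g)) ∧
    (l ≤ g →
      Filter.Tendsto
        (fun N => ∑ n ∈ Finset.range N, ∏ i ∈ Finset.range (n + 1),
          (g * i + h) / (g * i + h + l))
        Filter.atTop Filter.atTop) :=
  ⟨fun hgl => (affineRatioProd.hasSum_succ hg hh hgl).tsum_eq,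
    affineRatioProd.tendsto_sum_range_succ_atTop hg hh hl.le⟩
end

section
/- Let (a_i)_{i≥0} be nonnegative reals and define m(λ) = ∑_{n=1}^∞ ∏_{i=0}^{n-1} a_i/(a_i+λ) for λ > 0 (allowing the value ∞). Then m is antitone in λ, and if m(λ₀) < ∞ for some λ₀ > 0, then m(λ) → 0 as λ → ∞. Consequently, if additionally m(λ₁) > 1 for some λ₁ ≥ λ₀ with m(λ₁) < ∞ and m is continuous on [λ₁, ∞), there exists α ≥ λ₁ with m(α) = 1. -/
/-!
Each factor `a i / (a i + l)` is nonnegative and nonincreasing in `l > 0`, which gives the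
monotonicity. For `l ≥ l₀` the terms are dominated by those at `l₀`, which are summable when
`m l₀ < ∞`, and each term tends to `0`; dominated convergence gives `m l → 0`. The root of
`m = 1` then comes from the intermediate value theorem on `[l₁, l₂]`, with `l₂` so large that
`m l₂ < 1`.
-/

open Filter Finset Topology ENNReal

theorem ENNReal.tendsto_tsum_of_dominated_convergence {α β : Type*} {l : Filter α}
    [l.IsCountablyGenerated] {F : α → β → ℝ≥0∞} {g : β → ℝ≥0∞} (bound : β → ℝ≥0∞)
    (h_bound : ∀ᶠ x in l, ∀ k, F x k ≤ bound k) (h_fin : ∑' k, bound k ≠ ∞)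
    (h_lim : ∀ k, Tendsto (F · k) l (𝓝 (g k))) :
    Tendsto (fun x ↦ ∑' k, F x k) l (𝓝 (∑' k, g k)) := by
  let : MeasurableSpace β := ⊤
  simp only [← MeasureTheory.lintegral_count' measurable_from_top] at h_fin ⊢
  exact MeasureTheory.tendsto_lintegral_filter_of_dominated_convergence bound
    (.of_forall fun _ ↦ measurable_from_top)
    (h_bound.mono fun _ h ↦ .of_forall h) h_fin (.of_forall h_lim)

theorem exists_ge_eq_of_continuousOn_Ici_of_tendsto_atTop {δ : Type*} [LinearOrder δ]
    [TopologicalSpace δ] [OrderClosedTopology δ] {f : ℝ → δ} {x₀ : ℝ} {y L : δ}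
    (hf : ContinuousOn f (Set.Ici x₀)) (hlim : Tendsto f atTop (𝓝 L)) (hL : L < y)
    (hy : y ≤ f x₀) : ∃ x, x₀ ≤ x ∧ f x = y := by
  obtain ⟨x₁, hfx₁, hx₀₁⟩ :=
    ((hlim.eventually (Iio_mem_nhds hL)).and (eventually_ge_atTop x₀)).exists
  obtain ⟨x, hx, hfx⟩ := intermediate_value_Icc' hx₀₁ (hf.mono Set.Icc_subset_Ici_self)
    ⟨le_of_lt hfx₁, hy⟩
  exact ⟨x, hx.1, hfx⟩

noncomputable def ratioProdSum (a : ℕ → ℝ) (l : ℝ) : ℝ≥0∞ :=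
  ∑' n : ℕ, ENNReal.ofReal (∏ i ∈ range (n + 1), a i / (a i + l))

section ratioProdSum

variable {a : ℕ → ℝ}

theorem ratioProd_antitoneOn (ha : ∀ i, 0 ≤ a i) (n : ℕ) :
    AntitoneOn (fun l ↦ ∏ i ∈ range n, a i / (a i + l)) (Set.Ioi 0) := by
  intro l₁ hl₁ l₂ hl₂ h
  refine prod_le_prod (fun i _ ↦ ?_) (fun i _ ↦ ?_)
  · exact div_nonneg (ha i) (add_nonneg (ha i) (le_of_lt hl₂))
  · exact div_le_div_of_nonneg_left (ha i) (add_pos_of_nonneg_of_pos (ha i) hl₁)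
      (add_le_add_right h _)

theorem ratioProdSum_antitoneOn (ha : ∀ i, 0 ≤ a i) : AntitoneOn (ratioProdSum a) (Set.Ioi 0) :=
  fun _ hl₁ _ hl₂ h ↦ ENNReal.tsum_le_tsum fun n ↦
    ENNReal.ofReal_le_ofReal (ratioProd_antitoneOn ha (n + 1) hl₁ hl₂ h)

theorem tendsto_ratioProd_atTop (a : ℕ → ℝ) (n : ℕ) :
    Tendsto (fun l ↦ ∏ i ∈ range (n + 1), a i / (a i + l)) atTop (𝓝 0) := by
  have hfactor (i : ℕ) : Tendsto (fun l ↦ a i / (a i + l)) atTop (𝓝 0) :=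
    tendsto_const_nhds.div_atTop (tendsto_atTop_add_const_left _ _ tendsto_id)
  simpa using tendsto_finsetProd (range (n + 1)) fun i _ ↦ hfactor i

theorem tendsto_ratioProdSum_atTop (ha : ∀ i, 0 ≤ a i) {l₀ : ℝ} (hl₀ : 0 < l₀)
    (hfin : ratioProdSum a l₀ ≠ ∞) : Tendsto (ratioProdSum a) atTop (𝓝 0) := by
  have hterm (n : ℕ) := ENNReal.tendsto_ofReal (tendsto_ratioProd_atTop a n)
  simp only [ENNReal.ofReal_zero] at hterm
  have := ENNReal.tendsto_tsum_of_dominated_convergence _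
    ((eventually_ge_atTop l₀).mono fun l hl n ↦ ENNReal.ofReal_le_ofReal
      (ratioProd_antitoneOn ha (n + 1) hl₀ (hl₀.trans_le hl) hl)) hfin hterm
  rwa [tsum_zero] at this

end ratioProdSum

theorem stmt_6 (a : ℕ → ℝ) (ha : ∀ i, 0 ≤ a i) (m : ℝ → ENNReal)
    (hm : ∀ l : ℝ, m l =
      ∑' n : ℕ, ENNReal.ofReal (∏ i ∈ Finset.range (n + 1), a i / (a i + l))) :
    (∀ l₁ l₂ : ℝ, 0 < l₁ → l₁ ≤ l₂ → m l₂ ≤ m l₁) ∧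
    (∀ l₀ : ℝ, 0 < l₀ → m l₀ < ⊤ → Tendsto m atTop (nhds 0)) ∧
    (∀ l₀ l₁ : ℝ, 0 < l₀ → l₀ ≤ l₁ → m l₀ < ⊤ → 1 < m l₁ → m l₁ < ⊤ →
      ContinuousOn m (Set.Ici l₁) → ∃ α : ℝ, l₁ ≤ α ∧ m α = 1) := by
  obtain rfl : m = ratioProdSum a := funext hm
  have htendsto (l₀ : ℝ) (hl₀ : 0 < l₀) (hfin : ratioProdSum a l₀ < ⊤) :=
    tendsto_ratioProdSum_atTop ha hl₀ hfin.ne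
  refine ⟨fun l₁ l₂ hl₁ h ↦ ratioProdSum_antitoneOn ha hl₁ (hl₁.trans_le h) h, htendsto, ?_⟩
  intro l₀ l₁ hl₀ _ hfin₀ hgt _ hcont
  exact exists_ge_eq_of_continuousOn_Ici_of_tendsto_atTop hcont (htendsto l₀ hl₀ hfin₀)
    zero_lt_one hgt.le
end

section
/- Fix η > 0 and C > 0. There exists a constant K and t₀ such that for all t ≥ t₀, all integers a, b with η·t ≤ a ≤ b ≤ t, and all β ∈ [0, C], one has | ∏_{j=a+1}^{b-1} (1 - β/(j-1)) - (a/b)^β | ≤ K/t · (a/b)^β. -/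
/-!
Write the product as `∏_{k=a}^{b-2} (1 - β/k)`. Its logarithm minus `β log (a/(b-1))` is
`∑_k (log (1 - β/k) + β log (1 + 1/k))`, and since `log (1 + x) = x + O(x²)` the `k`-th summand
is `O(β(β+1)/k²) ≤ O(β(β+1)(1/(k-1) - 1/k))`, which telescopes to `O(1/a) = O(1/(ηt))`. So the
logarithms of the two sides differ by `O(1/t)`, and `|exp s - 1| ≤ 2|s|` turns this into a relative
error.
-/

open Real Finset

lemma abs_log_one_add_sub_le {x : ℝ} (hx : |x| ≤ 1 / 2) : |log (1 + x) - x| ≤ 2 * x ^ 2 := by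
  have h := abs_log_sub_add_sum_range_le (x := -x) (by rw [abs_neg]; linarith) 1
  simp only [sum_range_one, abs_neg, sub_neg_eq_add] at h
  norm_num at h
  calc |log (1 + x) - x| = |-x + log (1 + x)| := by rw [neg_add_eq_sub]
    _ ≤ x ^ 2 / (1 - |x|) := h
    _ ≤ 2 * x ^ 2 := by
      rw [div_le_iff₀ (by linarith)]
      nlinarith [sq_nonneg x, abs_nonneg x]

lemma abs_log_one_sub_div_add_mul_log_succ_sub_log_le {β k : ℝ} (hβ : 0 ≤ β) (hk : 2 ≤ k)
    (hβk : 2 * β ≤ k) :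
    |log (1 - β / k) + β * (log (k + 1) - log k)| ≤ 2 * β * (β + 1) * (1 / (k - 1) - 1 / k) := by
  have hk0 : 0 < k := by linarith
  have h₁ := abs_log_one_add_sub_le (x := -(β / k)) (by
    rw [abs_neg, abs_of_nonneg (by positivity), div_le_iff₀ hk0]; linarith)
  have h₂ := abs_log_one_add_sub_le (x := 1 / k) (by
    rw [abs_of_pos (by positivity), div_le_div_iff₀ hk0 two_pos]; linarith)
  have hlog : log (k + 1) - log k = log (1 + 1 / k) := by
    rw [← log_div (by positivity) hk0.ne']
    congr 1
    field_simp
  calc |log (1 - β / k) + β * (log (k + 1) - log k)|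
      = |(log (1 + -(β / k)) - -(β / k)) + β * (log (1 + 1 / k) - 1 / k)| := by
        rw [hlog]; ring_nf
    _ ≤ 2 * (-(β / k)) ^ 2 + β * (2 * (1 / k) ^ 2) := by
        refine (abs_add_le _ _).trans (add_le_add h₁ ?_)
        rw [abs_mul, abs_of_nonneg hβ]
        gcongr
    _ = 2 * β * (β + 1) / (k * k) := by field_simp
    _ ≤ 2 * β * (β + 1) / ((k - 1) * k) :=
        div_le_div_of_nonneg_left (by positivity) (by nlinarith) (by nlinarith)
    _ = 2 * β * (β + 1) * (1 / (k - 1) - 1 / k) := by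
        field_simp [show k - 1 ≠ 0 by linarith]; ring

lemma abs_log_prod_one_sub_div_sub_le {β : ℝ} {m n : ℕ} (hβ : 0 ≤ β) (hm : 2 ≤ m)
    (hβm : 2 * β ≤ m) (hmn : m ≤ n) :
    |log (∏ k ∈ Ico m n, (1 - β / k)) - β * log (m / n)| ≤ 2 * β * (β + 1) / (m - 1) := by
  have hm' : (2 : ℝ) ≤ m := by exact_mod_cast hm
  have hn' : (m : ℝ) ≤ n := by exact_mod_cast hmn
  have hk : ∀ k ∈ Ico m n, (2 : ℝ) ≤ k ∧ 2 * β ≤ k := fun k hk => by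
    have : (m : ℝ) ≤ k := by exact_mod_cast (mem_Ico.mp hk).1
    constructor <;> linarith
  have hfactor : ∀ k ∈ Ico m n, 1 - β / (k : ℝ) ≠ 0 := fun k hk' => by
    obtain ⟨hk2, hβk⟩ := hk k hk'
    exact (sub_pos.mpr ((div_lt_one (by linarith)).mpr (by linarith))).ne'
  have hlog_tel : ∑ k ∈ Ico m n, (log ((k : ℝ) + 1) - log k) = log n - log m := by
    simpa using sum_Ico_sub (fun k : ℕ => log (k : ℝ)) hmn
  have hinv_tel : ∑ k ∈ Ico m n, (1 / ((k : ℝ) - 1) - 1 / k) =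
      1 / ((m : ℝ) - 1) - 1 / ((n : ℝ) - 1) := by
    convert sum_Ico_sub (fun k : ℕ => -(1 / ((k : ℝ) - 1))) hmn using 1
    · exact sum_congr rfl fun k _ => by push_cast; ring
    · ring
  rw [log_prod hfactor, log_div (by linarith : (0 : ℝ) < m).ne' (by linarith : (0 : ℝ) < n).ne']
  calc |∑ k ∈ Ico m n, log (1 - β / k) - β * (log m - log n)|
      = |∑ k ∈ Ico m n, (log (1 - β / k) + β * (log ((k : ℝ) + 1) - log k))| := by
        rw [sum_add_distrib, ← mul_sum, hlog_tel]; ring_nf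
    _ ≤ ∑ k ∈ Ico m n, |log (1 - β / k) + β * (log ((k : ℝ) + 1) - log k)| :=
        abs_sum_le_sum_abs _ _
    _ ≤ ∑ k ∈ Ico m n, 2 * β * (β + 1) * (1 / ((k : ℝ) - 1) - 1 / k) :=
        sum_le_sum fun k hk' =>
          abs_log_one_sub_div_add_mul_log_succ_sub_log_le hβ (hk k hk').1 (hk k hk').2
    _ = 2 * β * (β + 1) * (1 / ((m : ℝ) - 1) - 1 / ((n : ℝ) - 1)) := by rw [← mul_sum, hinv_tel]
    _ ≤ 2 * β * (β + 1) / (m - 1) := by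
        rw [mul_sub, mul_one_div]
        have : 0 ≤ 2 * β * (β + 1) * (1 / ((n : ℝ) - 1)) := by
          have : (0 : ℝ) < n - 1 := by linarith
          positivity
        linarith

lemma abs_log_prod_Ico_succ_sub_le {β : ℝ} {a b : ℕ} (hβ : 0 ≤ β) (ha : 2 ≤ a)
    (hβa : 2 * β ≤ a) (hab : a ≤ b) :
    |log (∏ j ∈ Ico (a + 1) b, (1 - β / ((j : ℝ) - 1))) - β * log (a / b)| ≤
      4 * (β + 1) ^ 2 / a := by
  have ha' : (2 : ℝ) ≤ a := by exact_mod_cast ha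
  rcases hab.eq_or_lt with rfl | hlt
  · rw [Ico_eq_empty (by omega), prod_empty, div_self (by linarith), log_one, mul_zero, sub_zero,
      abs_zero]
    positivity
  obtain ⟨n, rfl⟩ : ∃ n, b = n + 1 := ⟨b - 1, by omega⟩
  have han : a ≤ n := by omega
  have han' : (a : ℝ) ≤ n := by exact_mod_cast han
  have hn0 : (0 : ℝ) < n := by linarith
  have hprod : ∏ j ∈ Ico (a + 1) (n + 1), (1 - β / ((j : ℝ) - 1)) =
      ∏ k ∈ Ico a n, (1 - β / k) := by
    rw [← prod_Ico_add']
    push_cast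
    simp only [add_sub_cancel_right]
  have hsplit : log (∏ k ∈ Ico a n, (1 - β / k)) - β * log (a / (n + 1 : ℕ)) =
      (log (∏ k ∈ Ico a n, (1 - β / k)) - β * log (a / n)) + β * (log ((n : ℝ) + 1) - log n) := by
    push_cast
    rw [log_div (by linarith) (by linarith), log_div (by linarith) hn0.ne']
    ring
  have hsucc : log ((n : ℝ) + 1) - log n ≤ 1 / n := by
    rw [← log_div (by linarith) hn0.ne']
    calc log (((n : ℝ) + 1) / n) ≤ ((n : ℝ) + 1) / n - 1 := log_le_sub_one_of_pos (by positivity)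
      _ = 1 / n := by field_simp; ring
  have hsucc₀ : 0 ≤ log ((n : ℝ) + 1) - log n := sub_nonneg.mpr (log_le_log hn0 (by linarith))
  rw [hprod, hsplit]
  calc _ ≤ 2 * β * (β + 1) / (a - 1) + β * (1 / a) := by
        refine (abs_add_le _ _).trans
          (add_le_add (abs_log_prod_one_sub_div_sub_le hβ ha hβa han) ?_)
        rw [abs_mul, abs_of_nonneg hβ, abs_of_nonneg hsucc₀]
        exact mul_le_mul_of_nonneg_left
          (hsucc.trans (one_div_le_one_div_of_le (by linarith) han')) hβ
    _ ≤ 4 * β * (β + 1) / a + β / a := by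
        gcongr ?_ + ?_
        · rw [div_le_div_iff₀ (by linarith) (by linarith)]
          nlinarith [mul_nonneg hβ (by linarith : 0 ≤ β + 1)]
        · rw [mul_one_div]
    _ ≤ 4 * (β + 1) ^ 2 / a := by
        rw [← add_div]
        gcongr
        nlinarith

lemma prod_Ico_succ_one_sub_div_sub_one_pos {β : ℝ} {a b : ℕ} (hβ : 0 ≤ β) (hβa : β < a) :
    0 < ∏ j ∈ Ico (a + 1) b, (1 - β / ((j : ℝ) - 1)) :=
  prod_pos fun j hj => by
    have : (a : ℝ) + 1 ≤ j := by exact_mod_cast (mem_Ico.mp hj).1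
    rw [sub_pos, div_lt_one (by linarith)]
    linarith

lemma abs_sub_le_two_mul_abs_log_sub_mul {x y : ℝ} (hx : 0 < x) (hy : 0 < y)
    (h : |log x - log y| ≤ 1) : |x - y| ≤ 2 * |log x - log y| * y :=
  calc |x - y| = y * |exp (log x - log y) - 1| := by
        rw [exp_sub, exp_log hx, exp_log hy, ← abs_of_pos hy, ← abs_mul, abs_of_pos hy, mul_sub,
          mul_div_cancel₀ _ hy.ne', mul_one]
    _ ≤ y * (2 * |log x - log y|) := by gcongr; exact abs_exp_sub_one_le h
    _ = 2 * |log x - log y| * y := by ring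

theorem stmt_15_general (η C : ℝ) (hη : 0 < η) :
    ∃ (K : ℝ) (t₀ : ℕ), ∀ t : ℕ, t₀ ≤ t → ∀ a b : ℕ,
      η * t ≤ (a : ℝ) → a ≤ b → b ≤ t → ∀ β : ℝ, β ∈ Set.Icc 0 C →
        |(∏ j ∈ Finset.Ico (a + 1) b, (1 - β / ((j : ℝ) - 1))) -
            ((a : ℝ) / b) ^ β| ≤
          K / t * ((a : ℝ) / b) ^ β := by
  set L := 4 * (C + 1) ^ 2 / η
  -- `t₀` forces `a ≥ ηt ≥ max 2 (2C)`, so every factor is at least `1/2`, and `L / t ≤ 1`.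
  refine ⟨2 * L, ⌈max L (max 2 (2 * C) / η)⌉₊, fun t ht a b ha hab _ β ⟨hβ₀, hβC⟩ => ?_⟩
  have ht' : max L (max 2 (2 * C) / η) ≤ t := Nat.ceil_le.mp ht
  have hηt : max 2 (2 * C) ≤ η * t := (div_le_iff₀' hη).mp (le_of_max_le_right ht')
  have ha₂ : (2 : ℝ) ≤ a := by linarith [le_max_left 2 (2 * C)]
  have ha₂' : 2 ≤ a := by exact_mod_cast ha₂
  have hβa : 2 * β ≤ a := by linarith [le_max_right 2 (2 * C)]
  have ht₀ : (0 : ℝ) < t := by nlinarith [le_max_left 2 (2 * C)]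
  have hb : (0 : ℝ) < b := Nat.cast_pos.mpr (by omega)
  have hlog : |log (∏ j ∈ Ico (a + 1) b, (1 - β / ((j : ℝ) - 1))) - log (((a : ℝ) / b) ^ β)| ≤
      L / t := by
    rw [log_rpow (by positivity)]
    calc _ ≤ 4 * (β + 1) ^ 2 / a := abs_log_prod_Ico_succ_sub_le hβ₀ ha₂' hβa hab
      _ ≤ 4 * (C + 1) ^ 2 / (η * t) := by gcongr
      _ = L / t := by rw [div_div, mul_comm η]
  have hP := prod_Ico_succ_one_sub_div_sub_one_pos (b := b) hβ₀ (by linarith : β < a)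
  have hQ : 0 < ((a : ℝ) / b) ^ β := by positivity
  calc _ ≤ 2 * |log (∏ j ∈ Ico (a + 1) b, (1 - β / ((j : ℝ) - 1))) - log (((a : ℝ) / b) ^ β)| *
        ((a : ℝ) / b) ^ β :=
        abs_sub_le_two_mul_abs_log_sub_mul hP hQ
          (hlog.trans ((div_le_one ht₀).mpr (le_of_max_le_left ht')))
    _ ≤ 2 * (L / t) * ((a : ℝ) / b) ^ β := by gcongr
    _ = 2 * L / t * ((a : ℝ) / b) ^ β := by ring

/-- Uniform Stirling-type estimate: for `ηt ≤ a ≤ b ≤ t` and `β ∈ [0, C]`,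
`∏_{j=a+1}^{b-1} (1 - β/(j-1))` equals `(a/b)^β` up to a relative error `O(1/t)`. -/
theorem stmt_15 (η C : ℝ) (hη : 0 < η) (hC : 0 < C) :
    ∃ (K : ℝ) (t₀ : ℕ), ∀ t : ℕ, t₀ ≤ t → ∀ a b : ℕ,
      η * t ≤ (a : ℝ) → a ≤ b → b ≤ t → ∀ β : ℝ, β ∈ Set.Icc 0 C →
        |(∏ j ∈ Finset.Ico (a + 1) b, (1 - β / ((j : ℝ) - 1))) -
            ((a : ℝ) / b) ^ β| ≤
          K / t * ((a : ℝ) / b) ^ β :=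
  stmt_15_general η C hη
end

section
/- Let k ≥ 0 and e_0, …, e_k ≥ 0 be fixed reals. Define for n ≥ k+2 the sum S_n = (1/n) · ∑ over integer tuples 1 ≤ i_0 < i_1 < ⋯ < i_k ≤ n of ∏_{s=0}^{k-1} [ (i_s/i_{s+1})^{e_s} · 1/(i_{s+1} - 1) ] · (i_k/n)^{e_k}. Then S_n → ∏_{s=0}^{k} 1/(e_s + 1) as n → ∞. -/
/-!
Summing out the smallest index `i₀` turns the `k`-fold sum carrying a weight `a (i₀)` into a
`(k - 1)`-fold sum of the same shape whose weight at `i₁ = m` is the mean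
`(m - 1)⁻¹ ∑_{j < m} a j (j / m) ^ e₀`. Comparing with Riemann sums of `x ^ e₀` and using Cesàro
averaging, this mean tends to `c / (e₀ + 1)` whenever `a → c`, so induction on `k` peels off one
factor `1 / (e_s + 1)` at a time, starting from `a ≡ 1`.
-/

open Filter Finset Topology

theorem tendsto_inv_mul_sum_mul_of_tendsto_zero {b : ℕ → ℝ} (hb : Tendsto b atTop (𝓝 0))
    {w : ℕ → ℕ → ℝ} {C : ℝ} (hw : ∀ n, ∀ i < n, |w n i| ≤ C) :
    Tendsto (fun n : ℕ => (n : ℝ)⁻¹ * ∑ i ∈ range n, b i * w n i) atTop (𝓝 0) := by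
  have hces : Tendsto (fun n : ℕ => C * ((n : ℝ)⁻¹ * ∑ i ∈ range n, |b i|)) atTop (𝓝 0) := by
    have := hb.abs.cesaro.const_mul C
    rwa [abs_zero, mul_zero] at this
  refine squeeze_zero_norm (fun n => ?_) hces
  rw [Real.norm_eq_abs, abs_mul, abs_inv, Nat.abs_cast, mul_left_comm, Finset.mul_sum]
  gcongr
  refine (abs_sum_le_sum_abs _ _).trans (sum_le_sum fun i hi => ?_)
  rw [abs_mul, mul_comm]
  exact mul_le_mul_of_nonneg_right (hw n i (mem_range.1 hi)) (abs_nonneg _)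

theorem MonotoneOn.abs_le_of_mem_Icc {f : ℝ → ℝ} {a b : ℝ} (hf : MonotoneOn f (Set.Icc a b))
    {x : ℝ} (hx : x ∈ Set.Icc a b) : |f x| ≤ |f a| + |f b| := by
  have hab : a ≤ b := hx.1.trans hx.2
  have h1 := hf ⟨le_rfl, hab⟩ hx hx.1
  have h2 := hf hx ⟨hab, le_rfl⟩ hx.2
  rw [abs_le]
  constructor <;> linarith [neg_abs_le (f a), le_abs_self (f b), abs_nonneg (f a),
    abs_nonneg (f b)]

theorem MonotoneOn.tendsto_riemannSum {f : ℝ → ℝ} (hf : MonotoneOn f (Set.Icc 0 1)) :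
    Tendsto (fun n : ℕ => (n : ℝ)⁻¹ * ∑ i ∈ range n, f (((i + 1 : ℕ) : ℝ) / n)) atTop
      (𝓝 (∫ x in (0 : ℝ)..1, f x)) := by
  set I := ∫ x in (0 : ℝ)..1, f x
  have hbounds : ∀ n : ℕ, 0 < n →
      I ≤ (n : ℝ)⁻¹ * ∑ i ∈ range n, f (((i + 1 : ℕ) : ℝ) / n) ∧
      (n : ℝ)⁻¹ * ∑ i ∈ range n, f (((i + 1 : ℕ) : ℝ) / n) ≤ I + (f 1 - f 0) * (n : ℝ)⁻¹ := by
    intro n hn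
    have hn' : (0 : ℝ) < n := by exact_mod_cast hn
    have hg : MonotoneOn (fun x => f (x / n)) (Set.Icc 0 (0 + n)) := by
      rintro x ⟨hx0, hxn⟩ y ⟨hy0, hyn⟩ hxy
      rw [zero_add] at hxn hyn
      exact hf ⟨by positivity, div_le_one_of_le₀ hxn hn'.le⟩
        ⟨by positivity, div_le_one_of_le₀ hyn hn'.le⟩ (by gcongr)
    have hint : ∫ x in (0 : ℝ)..n, f (x / n) = n * I := by
      rw [intervalIntegral.integral_comp_div _ hn'.ne', zero_div, div_self hn'.ne',
        smul_eq_mul]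
    have hlow := hg.sum_le_integral
    have hup := hg.integral_le_sum
    simp only [zero_add] at hlow hup
    rw [hint] at hlow hup
    have htel : ∑ i ∈ range n, f (((i + 1 : ℕ) : ℝ) / n) =
        ∑ i ∈ range n, f ((i : ℝ) / n) + (f 1 - f 0) := by
      have := Finset.sum_range_sub (fun i : ℕ => f ((i : ℝ) / n)) n
      rw [Finset.sum_sub_distrib, Nat.cast_zero, zero_div, div_self hn'.ne'] at this
      linarith
    constructor
    · rw [le_inv_mul_iff₀ hn']; exact hup
    · rw [inv_mul_le_iff₀ hn', htel]
      field_simp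
      linarith
  refine tendsto_of_tendsto_of_tendsto_of_le_of_le' tendsto_const_nhds ?_
    ((eventually_gt_atTop 0).mono fun n hn => (hbounds n hn).1)
    ((eventually_gt_atTop 0).mono fun n hn => (hbounds n hn).2)
  simpa using tendsto_const_nhds.add
    (tendsto_inv_atTop_zero.comp tendsto_natCast_atTop_atTop |>.const_mul (f 1 - f 0))

theorem MonotoneOn.tendsto_weightedRiemannSum {f : ℝ → ℝ} (hf : MonotoneOn f (Set.Icc 0 1))
    {a : ℕ → ℝ} {c : ℝ} (ha : Tendsto a atTop (𝓝 c)) :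
    Tendsto (fun n : ℕ => (n : ℝ)⁻¹ * ∑ i ∈ range n, a (i + 1) * f (((i + 1 : ℕ) : ℝ) / n))
      atTop (𝓝 (c * ∫ x in (0 : ℝ)..1, f x)) := by
  have hdev : Tendsto (fun n : ℕ =>
      (n : ℝ)⁻¹ * ∑ i ∈ range n, (a (i + 1) - c) * f (((i + 1 : ℕ) : ℝ) / n)) atTop (𝓝 0) := by
    refine tendsto_inv_mul_sum_mul_of_tendsto_zero (C := |f 0| + |f 1|) ?_ fun n i hi => ?_
    · simpa using (ha.comp (tendsto_add_atTop_nat 1)).sub_const c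
    · refine hf.abs_le_of_mem_Icc ⟨by positivity, div_le_one_of_le₀ ?_ (Nat.cast_nonneg n)⟩
      exact_mod_cast hi
  convert hdev.add (hf.tendsto_riemannSum.const_mul c) using 1
  · ext n
    simp only [sub_mul, sum_sub_distrib, ← Finset.mul_sum]
    ring
  · rw [zero_add]

theorem tendsto_weightedRiemannSum_rpow {e : ℝ} (he : 0 ≤ e) {a : ℕ → ℝ} {c : ℝ}
    (ha : Tendsto a atTop (𝓝 c)) :
    Tendsto (fun n : ℕ => (n : ℝ)⁻¹ * ∑ i ∈ range n, a (i + 1) * (((i + 1 : ℕ) : ℝ) / n) ^ e)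
      atTop (𝓝 (c / (e + 1))) := by
  have hmono : MonotoneOn (fun x : ℝ => x ^ e) (Set.Icc 0 1) :=
    (Real.monotoneOn_rpow_Ici_of_exponent_nonneg he).mono Set.Icc_subset_Ici_self
  have hint : ∫ x in (0 : ℝ)..1, x ^ e = 1 / (e + 1) := by
    rw [integral_rpow (Or.inl (by linarith)), Real.one_rpow, Real.zero_rpow (by linarith),
      sub_zero]
  simpa [hint, div_eq_mul_one_div c] using hmono.tendsto_weightedRiemannSum ha

noncomputable def powerWeightedMean (e : ℝ) (a : ℕ → ℝ) (m : ℕ) : ℝ :=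
  ((m : ℝ) - 1)⁻¹ * ∑ i ∈ range (m - 1), a (i + 1) * (((i + 1 : ℕ) : ℝ) / m) ^ e

theorem tendsto_powerWeightedMean {e : ℝ} (he : 0 ≤ e) {a : ℕ → ℝ} {c : ℝ}
    (ha : Tendsto a atTop (𝓝 c)) :
    Tendsto (powerWeightedMean e a) atTop (𝓝 (c / (e + 1))) := by
  rw [← tendsto_add_atTop_iff_nat 1]
  have hratio : Tendsto (fun n : ℕ => ((n : ℝ) / (n + 1)) ^ e) atTop (𝓝 1) := by
    simpa using (tendsto_natCast_div_add_atTop (1 : ℝ)).rpow_const (Or.inr he)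
  refine (one_mul (c / (e + 1)) ▸ hratio.mul (tendsto_weightedRiemannSum_rpow he ha)).congr' ?_
  filter_upwards [eventually_gt_atTop 0] with n hn
  have hn' : (n : ℝ) ≠ 0 := by positivity
  simp only [powerWeightedMean, Nat.add_sub_cancel, Nat.cast_add, Nat.cast_one,
    add_sub_cancel_right, Finset.mul_sum]
  refine sum_congr rfl fun i _ => ?_
  have hsplit :
      (((i : ℝ) + 1) / (n + 1)) ^ e = ((n : ℝ) / (n + 1)) ^ e * (((i : ℝ) + 1) / n) ^ e := by
    rw [← Real.mul_rpow (by positivity) (by positivity)]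
    field_simp
  rw [hsplit]
  ring

def strictChains (k n : ℕ) : Finset (Fin (k + 1) → Fin (n + 1)) :=
  univ.filter fun i => StrictMono i ∧ ∀ s, 1 ≤ (i s : ℕ)

theorem mem_strictChains {k n : ℕ} {i : Fin (k + 1) → Fin (n + 1)} :
    i ∈ strictChains k n ↔ StrictMono i ∧ ∀ s, 1 ≤ (i s : ℕ) := by
  simp [strictChains]

theorem cons_mem_strictChains {k n : ℕ} {x : Fin (n + 1)} {f : Fin (k + 1) → Fin (n + 1)} :
    Fin.cons x f ∈ strictChains (k + 1) n ↔
      f ∈ strictChains k n ∧ 1 ≤ (x : ℕ) ∧ (x : ℕ) < f 0 := by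
  simp only [mem_strictChains, Fin.strictMono_iff_lt_succ, Fin.forall_fin_succ, Fin.cons_zero,
    Fin.cons_succ, Fin.castSucc_zero, ← Fin.succ_castSucc, Fin.lt_def]
  tauto

theorem sum_strictChains_succ {M : Type*} [AddCommMonoid M] {k n : ℕ}
    (g : (Fin (k + 2) → Fin (n + 1)) → M) :
    ∑ i ∈ strictChains (k + 1) n, g i =
      ∑ f ∈ strictChains k n,
        ∑ x ∈ univ.filter (fun x : Fin (n + 1) => 1 ≤ (x : ℕ) ∧ (x : ℕ) < f 0),
          g (Fin.cons x f) := by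
  rw [← sum_ite_mem_eq (strictChains (k + 1) n) g,
    ← (Fin.consEquiv fun _ => Fin (n + 1)).sum_comp, Fintype.sum_prod_type, sum_comm,
    ← sum_ite_mem_eq (strictChains k n)]
  refine sum_congr rfl fun f _ => ?_
  by_cases hf : f ∈ strictChains k n <;>
    simp [Fin.consEquiv, cons_mem_strictChains, hf, sum_filter]

theorem sum_filter_one_le_lt {M : Type*} [AddCommMonoid M] (g : ℕ → M) {m n : ℕ}
    (hm : m ≤ n + 1) :
    ∑ x ∈ univ.filter (fun x : Fin (n + 1) => 1 ≤ (x : ℕ) ∧ (x : ℕ) < m), g x =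
      ∑ i ∈ range (m - 1), g (i + 1) := by
  rw [sum_filter, Fin.sum_univ_eq_sum_range (fun j => if 1 ≤ j ∧ j < m then g j else 0),
    ← sum_filter]
  have hIco : (range (n + 1)).filter (fun j => 1 ≤ j ∧ j < m) = Ico 1 m := by
    ext j; simp only [mem_filter, mem_range, mem_Ico]; omega
  rw [hIco, sum_Ico_eq_sum_range]
  simp only [add_comm 1]

theorem sum_strictChains_zero {M : Type*} [AddCommMonoid M] (g : ℕ → M) (n : ℕ) :
    ∑ i ∈ strictChains 0 n, g (i 0) = ∑ i ∈ range n, g (i + 1) := by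
  have hfilter := sum_filter_one_le_lt g (le_refl (n + 1))
  rw [Nat.add_sub_cancel] at hfilter
  rw [← hfilter]
  refine sum_equiv (Equiv.funUnique (Fin 1) (Fin (n + 1))) (fun i => ?_) (fun _ _ => rfl)
  simp [mem_strictChains, Subsingleton.strictMono, Fin.forall_fin_one, Fin.is_le]

/-- `chainSum k e 1 n` is the paper's `S_n`. -/
noncomputable def chainSum (k : ℕ) (e : Fin (k + 1) → ℝ) (a : ℕ → ℝ) (n : ℕ) : ℝ :=
  (n : ℝ)⁻¹ * ∑ i ∈ strictChains k n, a (i 0) *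
    ((∏ s : Fin k, (((i s.castSucc : ℕ) : ℝ) / ((i s.succ : ℕ) : ℝ)) ^ e s.castSucc *
        (1 / (((i s.succ : ℕ) : ℝ) - 1))) *
      (((i (Fin.last k) : ℕ) : ℝ) / n) ^ e (Fin.last k))

theorem chainSum_zero (e : Fin 1 → ℝ) (a : ℕ → ℝ) (n : ℕ) :
    chainSum 0 e a n = (n : ℝ)⁻¹ * ∑ i ∈ range n, a (i + 1) * (((i + 1 : ℕ) : ℝ) / n) ^ e 0 := by
  rw [chainSum, ← sum_strictChains_zero (fun j => a j * ((j : ℝ) / n) ^ e 0)]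
  simp [Fin.last]

theorem chainSum_succ (k : ℕ) (e : Fin (k + 2) → ℝ) (a : ℕ → ℝ) (n : ℕ) :
    chainSum (k + 1) e a n = chainSum k (Fin.tail e) (powerWeightedMean (e 0) a) n := by
  rw [chainSum, chainSum, sum_strictChains_succ]
  congr 1
  refine sum_congr rfl fun f _ => ?_
  simp only [Fin.prod_univ_succ, Fin.cons_zero, Fin.cons_succ, Fin.castSucc_zero,
    ← Fin.succ_castSucc, ← Fin.succ_last, Fin.tail]
  rw [powerWeightedMean, ← sum_filter_one_le_lt (fun j => a j * ((j : ℝ) / (f 0 : ℕ)) ^ e 0)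
    (f 0).isLt.le, mul_comm (_⁻¹), mul_assoc, sum_mul]
  refine sum_congr rfl fun x _ => ?_
  ring

theorem tendsto_chainSum (k : ℕ) {e : Fin (k + 1) → ℝ} (he : ∀ s, 0 ≤ e s) {a : ℕ → ℝ} {c : ℝ}
    (ha : Tendsto a atTop (𝓝 c)) :
    Tendsto (chainSum k e a) atTop (𝓝 (c * ∏ s, 1 / (e s + 1))) := by
  induction k generalizing a c with
  | zero =>
    rw [funext (chainSum_zero e a), Fin.prod_univ_one, ← div_eq_mul_one_div]
    exact tendsto_weightedRiemannSum_rpow (he 0) ha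
  | succ k ih =>
    rw [funext (chainSum_succ k e a)]
    convert ih (e := Fin.tail e) (fun s => he s.succ) (tendsto_powerWeightedMean (he 0) ha) using 2
    rw [Fin.prod_univ_succ, div_eq_mul_one_div c, mul_assoc]
    rfl

theorem stmt_17 (k : ℕ) (e : Fin (k + 1) → ℝ) (he : ∀ s, 0 ≤ e s)
    (S : ℕ → ℝ)
    (hS : ∀ n : ℕ, k + 2 ≤ n → S n = (1 / (n : ℝ)) *
      ∑ i ∈ Finset.univ.filter
          (fun i : Fin (k + 1) → Fin (n + 1) => StrictMono i ∧ ∀ s, 1 ≤ (i s : ℕ)),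
        (∏ s : Fin k,
            ((((i s.castSucc : Fin (n + 1)) : ℕ) : ℝ) / (((i s.succ : Fin (n + 1)) : ℕ) : ℝ))
                ^ (e s.castSucc) *
              (1 / ((((i s.succ : Fin (n + 1)) : ℕ) : ℝ) - 1))) *
          ((((i (Fin.last k) : Fin (n + 1)) : ℕ) : ℝ) / (n : ℝ)) ^ (e (Fin.last k))) :
    Filter.Tendsto S Filter.atTop (nhds (∏ s : Fin (k + 1), 1 / (e s + 1))) := by
  have hlim := tendsto_chainSum k he (tendsto_const_nhds (x := (1 : ℝ)))
  rw [one_mul] at hlim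
  refine hlim.congr' ?_
  filter_upwards [eventually_ge_atTop (k + 2)] with n hn
  simp only [hS n hn, chainSum, strictChains, one_mul, one_div]
end
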